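/- Let H be a real Hilbert space, V a closed subspace with orthogonal projection P : H → V, a, v ∈ H, and φ ∈ [0, π] with φ > ∠(v,V⊥). Then P[C_H(a, v, φ)] = V, i.e. the orthogonal projection of the cone C_H(a, v, φ) onto V is all of V. -/

import Mathlib

open scoped RealInnerProductSpace Classical

/-- The angle between a vector `v` and the orthogonal complement of `V`:
`∠(v,V⊥) = arccos (‖v - P v‖ / ‖v‖)` for `v ≠ 0` and `V ≠ H`, with the conventions
`∠(v,V⊥) = π` when `v = 0` or `V = H` (note that it gives `0` when `V = {0}`, `v ≠ 0`). -/
noncomputable def angleToPerp {H : Type*} [NormedAddCommGroup H] [InnerProductSpace ℝ H]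
    [CompleteSpace H] (V : Submodule ℝ H) [CompleteSpace V] (v : H) : ℝ :=
  if v = 0 ∨ V = ⊤ then Real.pi
  else Real.arccos (‖v - (Submodule.orthogonalProjection V v : H)‖ / ‖v‖)

/-! Write `q = v - P v ∈ V⊥`. The angle hypothesis says `cos φ ‖v‖ < ‖q‖`, so some `z ∈ V⊥`
satisfies `⟪z, v⟫ > cos φ ‖z‖ ‖v‖`, i.e. points strictly into the cone: `z = q` if `q ≠ 0`, and any
nonzero `z ∈ V⊥` otherwise (then `cos φ < 0`). Pushing any `x ∈ V` far enough along `z` lands in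
the cone, and `P (x + t z) = x`. -/

open Submodule

section

variable {H : Type*} [NormedAddCommGroup H] [InnerProductSpace ℝ H]

def roundCone (a v : H) (φ : ℝ) : Set H :=
  {u | ⟪u - a, v⟫ ≥ Real.cos φ * (‖u - a‖ * ‖v‖)}

theorem exists_add_smul_mem_roundCone (a y : H) {v z : H} {φ : ℝ}
    (hz : Real.cos φ * (‖z‖ * ‖v‖) < ⟪z, v⟫) : ∃ t : ℝ, y + t • z ∈ roundCone a v φ := by
  set w := y - a
  set δ := ⟪z, v⟫ - Real.cos φ * (‖z‖ * ‖v‖)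
  have hδ : 0 < δ := sub_pos.mpr hz
  -- the gain `t δ` along `z` pays exactly for the Cauchy–Schwarz defect of `w = y - a`
  set t := (‖w‖ * ‖v‖ - ⟪w, v⟫) / δ
  have ht : 0 ≤ t := div_nonneg (sub_nonneg.mpr (real_inner_le_norm w v)) hδ.le
  have htδ : t * δ = ‖w‖ * ‖v‖ - ⟪w, v⟫ := div_mul_cancel₀ _ hδ.ne'
  have hshift : y + t • z - a = w + t • z := add_sub_right_comm y (t • z) a
  have hnorm : Real.cos φ * (‖w + t • z‖ - t * ‖z‖) ≤ ‖w‖ := by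
    have hdev : |‖w + t • z‖ - t * ‖z‖| ≤ ‖w‖ := by
      simpa [norm_smul, abs_of_nonneg ht] using abs_norm_sub_norm_le (w + t • z) (t • z)
    calc Real.cos φ * (‖w + t • z‖ - t * ‖z‖)
        ≤ |Real.cos φ| * |‖w + t • z‖ - t * ‖z‖| := by rw [← abs_mul]; exact le_abs_self _
      _ ≤ 1 * ‖w‖ := by gcongr; exact Real.abs_cos_le_one φ
      _ = ‖w‖ := one_mul _
  refine ⟨t, ?_⟩
  show ⟪y + t • z - a, v⟫ ≥ Real.cos φ * (‖y + t • z - a‖ * ‖v‖)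
  rw [hshift]
  calc Real.cos φ * (‖w + t • z‖ * ‖v‖)
      = Real.cos φ * (‖w + t • z‖ - t * ‖z‖) * ‖v‖ + t * (⟪z, v⟫ - δ) := by ring
    _ ≤ ‖w‖ * ‖v‖ + t * (⟪z, v⟫ - δ) := by gcongr
    _ = ⟪w + t • z, v⟫ := by rw [inner_add_left, real_inner_smul_left]; linarith

theorem exists_mem_orthogonal_mul_norm_lt_inner {V : Submodule ℝ H} [V.HasOrthogonalProjection]
    (hV : V ≠ ⊤) {v : H} {c : ℝ} (h : c * ‖v‖ < ‖Vᗮ.starProjection v‖) :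
    ∃ z ∈ Vᗮ, c * (‖z‖ * ‖v‖) < ⟪z, v⟫ := by
  set q := Vᗮ.starProjection v
  by_cases hq : q = 0
  · obtain ⟨z, hzV, hz⟩ := exists_mem_ne_zero_of_ne_bot ((orthogonal_eq_bot_iff).not.mpr hV)
    have hv : v ∈ V := by
      simpa [orthogonal_orthogonal] using (starProjection_apply_eq_zero_iff (K := Vᗮ)).mp hq
    refine ⟨z, hzV, ?_⟩
    rw [hq, norm_zero] at h
    rw [inner_left_of_mem_orthogonal hv hzV, mul_left_comm]
    exact mul_neg_of_pos_of_neg (norm_pos_iff.mpr hz) h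
  · refine ⟨q, starProjection_apply_mem _ v, ?_⟩
    have hqv : ⟪q, v⟫ = ‖q‖ ^ 2 := by
      simpa [q] using Vᗮ.re_inner_starProjection_eq_normSq v
    rw [hqv, mul_left_comm, sq]
    exact mul_lt_mul_of_pos_left h (norm_pos_iff.mpr hq)

theorem ne_top_and_cos_mul_norm_lt_of_angleToPerp_lt [CompleteSpace H] {V : Submodule ℝ H}
    [CompleteSpace V] {v : H} {φ : ℝ} (hφπ : φ ≤ Real.pi) (h : angleToPerp V v < φ) :
    V ≠ ⊤ ∧ Real.cos φ * ‖v‖ < ‖Vᗮ.starProjection v‖ := by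
  unfold angleToPerp at h
  split_ifs at h with hdeg
  · linarith
  obtain ⟨hv, hV⟩ := not_or.mp hdeg
  rw [← starProjection_apply, ← starProjection_orthogonal_val] at h
  have hvpos : 0 < ‖v‖ := norm_pos_iff.mpr hv
  have hratio : ‖Vᗮ.starProjection v‖ / ‖v‖ ≤ 1 :=
    (div_le_one hvpos).mpr (norm_starProjection_apply_le _ v)
  have hcos := Real.cos_lt_cos_of_nonneg_of_le_pi (Real.arccos_nonneg _) hφπ h
  have hratio₀ : 0 ≤ ‖Vᗮ.starProjection v‖ / ‖v‖ := by positivity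
  rw [Real.cos_arccos (by linarith) hratio] at hcos
  exact ⟨hV, (lt_div_iff₀ hvpos).mp hcos⟩

end

theorem image_starProjection_eq_of_forall_exists_add_smul_mem {𝕜 E : Type*} [RCLike 𝕜]
    [NormedAddCommGroup E] [InnerProductSpace 𝕜 E] {V : Submodule 𝕜 E} [V.HasOrthogonalProjection]
    {S : Set E} {z : E} (hz : z ∈ Vᗮ) (hS : ∀ y, ∃ t : 𝕜, y + t • z ∈ S) :
    V.starProjection '' S = V := by
  refine (Set.image_subset_iff.mpr fun u _ => starProjection_apply_mem V u).antisymm fun x hx => ?_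
  obtain ⟨t, ht⟩ := hS x
  exact ⟨x + t • z, ht, eq_starProjection_of_mem_orthogonal' hx (Vᗮ.smul_mem t hz) rfl⟩

theorem stmt9_general {H : Type*} [NormedAddCommGroup H] [InnerProductSpace ℝ H] [CompleteSpace H]
    (V : Submodule ℝ H) [CompleteSpace V]
    (a v : H) (φ : ℝ) (hφπ : φ ≤ Real.pi)
    (hφψ : angleToPerp V v < φ) :
    (fun u : H => (Submodule.orthogonalProjection V u : H)) ''
        {u : H | ⟪u - a, v⟫ ≥ Real.cos φ * (‖u - a‖ * ‖v‖)} = (V : Set H) := by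
  obtain ⟨hV, hcos⟩ := ne_top_and_cos_mul_norm_lt_of_angleToPerp_lt hφπ hφψ
  obtain ⟨z, hzV, hz⟩ := exists_mem_orthogonal_mul_norm_lt_inner hV hcos
  exact image_starProjection_eq_of_forall_exists_add_smul_mem hzV
    fun y => exists_add_smul_mem_roundCone a y hz

/-- If `0 ≤ φ ≤ π` and `φ > ∠(v,V⊥)`, then `P[C_H(a,v,φ)] = V`. -/
theorem stmt9 {H : Type*} [NormedAddCommGroup H] [InnerProductSpace ℝ H] [CompleteSpace H]
    (V : Submodule ℝ H) [CompleteSpace V]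
    (a v : H) (φ : ℝ) (hφ0 : 0 ≤ φ) (hφπ : φ ≤ Real.pi)
    (hφψ : angleToPerp V v < φ) :
    (fun u : H => (Submodule.orthogonalProjection V u : H)) ''
        {u : H | ⟪u - a, v⟫ ≥ Real.cos φ * (‖u - a‖ * ‖v‖)} = (V : Set H) :=
  stmt9_general V a v φ hφπ hφψ
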